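/- arXiv:math-ph/0409061 — 3 statements merged into one kernel-verified Lean document; each statement's English description precedes it below -/
import Mathlib

section
/- If ρ² ≥ 1 then the function V(σ) = σ²/(2ρ²) - log cosh(σ/ρ²) on ℝ is convex and has a unique global minimum at σ = 0. -/
/-!
Put `a = ρ⁻²` and `g x = x² / 2 - log (cosh x)`, so that `V σ = (a - a²) σ² / 2 + g (a σ)`.
Since `g'' = tanh² ≥ 0`, `g` is convex, and `a ≤ 1` makes the quadratic part convex as well.
Comparing the series of `cosh x` and `exp (x² / 2)` term by term (`(2n)! ≥ 2ⁿ n!`) gives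
`log (cosh x) ≤ x² / 2`, strictly for `x ≠ 0`; hence `V σ ≥ g (a σ) ≥ 0 = V 0`, with equality
only at `σ = 0`.
-/

open Real Set

lemma Real.cosh_lt_exp_half_sq {x : ℝ} (hx : x ≠ 0) : cosh x < exp (x ^ 2 / 2) := by
  have hexp := NormedSpace.expSeries_div_hasSum_exp (x ^ 2 / 2)
  rw [← exp_eq_exp_ℝ] at hexp
  refine hasSum_lt (i := 2) (fun n ↦ ?_) ?_ x.hasSum_cosh hexp
  · simp only [div_pow, pow_mul, div_div]
    gcongr
    exact_mod_cast Nat.two_pow_mul_factorial_le_factorial_two_mul _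
  · have : 0 < x ^ 4 := by positivity
    norm_num [Nat.factorial, ← pow_mul]
    linarith

lemma Real.log_cosh_le_half_sq (x : ℝ) : log (cosh x) ≤ x ^ 2 / 2 :=
  (log_le_iff_le_exp (cosh_pos x)).2 (cosh_le_exp_half_sq x)

lemma Real.log_cosh_lt_half_sq {x : ℝ} (hx : x ≠ 0) : log (cosh x) < x ^ 2 / 2 :=
  (log_lt_iff_lt_exp (cosh_pos x)).2 (cosh_lt_exp_half_sq hx)

lemma Real.hasDerivAt_tanh (x : ℝ) : HasDerivAt tanh (1 - tanh x ^ 2) x := by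
  have h := (hasDerivAt_sinh x).div (hasDerivAt_cosh x) (cosh_pos x).ne'
  rw [show sinh / cosh = tanh from funext fun y ↦ (tanh_eq_sinh_div_cosh y).symm] at h
  refine h.congr_deriv ?_
  rw [tanh_eq_sinh_div_cosh]
  field_simp

lemma Real.hasDerivAt_log_cosh (x : ℝ) : HasDerivAt (fun x ↦ log (cosh x)) (tanh x) x := by
  convert (hasDerivAt_cosh x).log (cosh_pos x).ne' using 1
  exact tanh_eq_sinh_div_cosh x

lemma convexOn_half_sq_sub_log_cosh :
    ConvexOn ℝ univ fun x : ℝ ↦ x ^ 2 / 2 - log (cosh x) := by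
  refine convexOn_of_hasDerivWithinAt2_nonneg (f' := fun x ↦ x - tanh x)
    (f'' := fun x ↦ tanh x ^ 2) convex_univ ?_ (fun x _ ↦ ?_) (fun x _ ↦ ?_)
    (fun x _ ↦ sq_nonneg _)
  · exact ((continuous_pow 2).div_const 2 |>.sub
      (continuous_cosh.log fun x ↦ (cosh_pos x).ne')).continuousOn
  · exact (((hasDerivAt_pow 2 x).div_const 2).sub (hasDerivAt_log_cosh x)).hasDerivWithinAt
      |>.congr_deriv (by ring)
  · exact ((hasDerivAt_id x).sub (hasDerivAt_tanh x)).hasDerivWithinAt.congr_deriv (by ring)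

section DoubleWell

variable {a : ℝ}

lemma convexOn_mul_sq_div_two_sub_log_cosh_mul (ha₀ : 0 ≤ a) (ha₁ : a ≤ 1) :
    ConvexOn ℝ univ fun σ : ℝ ↦ a * σ ^ 2 / 2 - log (cosh (a * σ)) := by
  have hquad : ConvexOn ℝ univ fun σ : ℝ ↦ ((a - a ^ 2) / 2) • σ ^ 2 :=
    even_two.convexOn_pow.smul <| by linarith [pow_le_of_le_one ha₀ ha₁ two_ne_zero]
  refine (hquad.add
    (convexOn_half_sq_sub_log_cosh.comp_linearMap (LinearMap.mul ℝ ℝ a))).congr fun σ _ ↦ ?_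
  simp only [Pi.add_apply, Function.comp_apply, LinearMap.mul_apply', smul_eq_mul]
  ring

lemma log_cosh_mul_le_mul_sq_div_two (ha₀ : 0 ≤ a) (ha₁ : a ≤ 1) (σ : ℝ) :
    log (cosh (a * σ)) ≤ a * σ ^ 2 / 2 :=
  calc log (cosh (a * σ)) ≤ (a * σ) ^ 2 / 2 := log_cosh_le_half_sq _
    _ ≤ a * σ ^ 2 / 2 := by
      rw [mul_pow]; gcongr; exact pow_le_of_le_one ha₀ ha₁ two_ne_zero

lemma log_cosh_mul_lt_mul_sq_div_two (ha₀ : 0 < a) (ha₁ : a ≤ 1) {σ : ℝ} (hσ : σ ≠ 0) :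
    log (cosh (a * σ)) < a * σ ^ 2 / 2 :=
  calc log (cosh (a * σ)) < (a * σ) ^ 2 / 2 := log_cosh_lt_half_sq (by positivity)
    _ ≤ a * σ ^ 2 / 2 := by
      rw [mul_pow]; gcongr; exact pow_le_of_le_one ha₀.le ha₁ two_ne_zero

end DoubleWell

theorem doubleWell_convex_of_one_le_general (ρ : ℝ) (h1 : 1 ≤ ρ ^ 2) :
    let V : ℝ → ℝ := fun σ => σ ^ 2 / (2 * ρ ^ 2) - Real.log (Real.cosh (σ / ρ ^ 2))
    ConvexOn ℝ Set.univ V ∧ (∀ σ : ℝ, V 0 ≤ V σ) ∧ (∀ σ : ℝ, V σ = V 0 → σ = 0) := by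
  intro V
  set a := (ρ ^ 2)⁻¹
  have ha₀ : 0 < a := inv_pos.2 (by linarith)
  have ha₁ : a ≤ 1 := inv_le_one_of_one_le₀ h1
  have hV : V = fun σ ↦ a * σ ^ 2 / 2 - log (cosh (a * σ)) := by
    funext σ
    simp only [V, a, ← div_eq_inv_mul]
    ring
  have hV₀ : V 0 = 0 := by simp [hV]
  refine ⟨hV ▸ convexOn_mul_sq_div_two_sub_log_cosh_mul ha₀.le ha₁, fun σ ↦ ?_, fun σ hσ ↦ ?_⟩
  · rw [hV₀, hV, sub_nonneg]
    exact log_cosh_mul_le_mul_sq_div_two ha₀.le ha₁ σ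
  · by_contra hne
    rw [hV₀, hV, sub_eq_zero] at hσ
    exact (log_cosh_mul_lt_mul_sq_div_two ha₀ ha₁ hne).ne' hσ

/-- If `ρ² ≥ 1` then the double-well potential `V σ = σ²/(2ρ²) - log cosh(σ/ρ²)`
is convex and has a unique global minimum at `σ = 0`. -/
theorem doubleWell_convex_of_one_le (ρ : ℝ) (hρ : 0 < ρ) (h1 : 1 ≤ ρ ^ 2) :
    let V : ℝ → ℝ := fun σ => σ ^ 2 / (2 * ρ ^ 2) - Real.log (Real.cosh (σ / ρ ^ 2))
    ConvexOn ℝ Set.univ V ∧ (∀ σ : ℝ, V 0 ≤ V σ) ∧ (∀ σ : ℝ, V σ = V 0 → σ = 0) :=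
  doubleWell_convex_of_one_le_general ρ h1
end

section
/- If 0 < ρ² < 1 then V(σ) = σ²/(2ρ²) - log cosh(σ/ρ²) has exactly two global minimizers ±m, where m > 0 is the largest solution of m = tanh(m/ρ²); in particular V''(0) < 0, so 0 is a strict local maximum. -/
/-!
With `c = ρ²`, `V = doubleWell c` and `g = tanhGap c`, i.e. `g σ = σ - tanh (σ / c)`, we have
`V' = g / c`, so `V''(0) = (1 - 1/c) / c < 0`.
Since `tanh` is increasing and positive on `(0, ∞)`, `g'` is strictly increasing there, so `g` is
strictly convex on `[0, ∞)`. As `g 0 = 0`, `g' 0 < 0` and `g 1 > 0`, `g` has a positive zero `m`, and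
convexity forces `g < 0` on `(0, m)` and `g > 0` on `(m, ∞)`. Hence the even function `V` decreases
on `[0, m]` and increases on `[m, ∞)`, so its minimizers are exactly `±m`.
-/

open Real Set Filter Topology

namespace Real

theorem hasDerivAt_tanh_s2 (x : ℝ) : HasDerivAt tanh (1 - tanh x ^ 2) x := by
  have h := (hasDerivAt_sinh x).div (hasDerivAt_cosh x) (cosh_pos x).ne'
  rw [show tanh = sinh / cosh from funext tanh_eq_sinh_div_cosh]
  refine h.congr_deriv ?_
  rw [Pi.div_apply]
  field_simp

theorem strictMono_tanh : StrictMono tanh :=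
  strictMono_of_deriv_pos fun x ↦ (hasDerivAt_tanh_s2 x).deriv ▸ sub_pos.2 (tanh_sq_lt_one x)

theorem tanh_pos {x : ℝ} (hx : 0 < x) : 0 < tanh x :=
  tanh_zero ▸ strictMono_tanh hx

end Real

theorem HasDerivAt.eventually_lt_of_neg {f : ℝ → ℝ} {f' x : ℝ} (hf : HasDerivAt f f' x)
    (hf' : f' < 0) : ∀ᶠ z in 𝓝[>] x, f z < f x := by
  filter_upwards [hf.hasDerivWithinAt.limsup_slope_le' (lt_irrefl x) hf', self_mem_nhdsWithin]
    with z hslope hxz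
  exact (slope_neg_iff_of_le (le_of_lt hxz)).1 hslope

theorem StrictConvexOn.neg_of_mem_Ioo {s : Set ℝ} {g : ℝ → ℝ} (hg : StrictConvexOn ℝ s g)
    {a b x : ℝ} (ha : a ∈ s) (hb : b ∈ s) (hga : g a = 0) (hgb : g b = 0) (hx : x ∈ Ioo a b) :
    g x < 0 := by
  have hab := hx.1.trans hx.2
  simpa [hga, hgb] using hg.lt_on_openSegment ha hb hab.ne (by rwa [openSegment_eq_Ioo hab])

theorem StrictConvexOn.pos_of_lt {s : Set ℝ} {g : ℝ → ℝ} (hg : StrictConvexOn ℝ s g)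
    {a b x : ℝ} (ha : a ∈ s) (hx : x ∈ s) (hga : g a = 0) (hgb : g b = 0) (hab : a < b)
    (hbx : b < x) : 0 < g x := by
  have hax := hab.trans hbx
  have := hg.lt_on_openSegment ha hx hax.ne (by rw [openSegment_eq_Ioo hax]; exact ⟨hab, hbx⟩)
  rw [hga, hgb] at this
  exact (lt_max_iff.1 this).resolve_left (lt_irrefl 0)

theorem setOf_forall_le_eq_pair_of_even {f : ℝ → ℝ} {m : ℝ} (hm : 0 ≤ m)
    (heven : ∀ x, f (-x) = f x) (hanti : StrictAntiOn f (Icc 0 m))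
    (hmono : StrictMonoOn f (Ici m)) :
    {σ : ℝ | ∀ σ' : ℝ, f σ ≤ f σ'} = {m, -m} := by
  have hf_abs : ∀ x, f |x| = f x := fun x ↦ by
    rcases abs_choice x with h | h <;> simp only [h, heven]
  have hlt : ∀ x, |x| ≠ m → f m < f x := fun x hx ↦ by
    rw [← hf_abs x]
    rcases hx.lt_or_gt with h | h
    · exact hanti ⟨abs_nonneg x, h.le⟩ ⟨hm, le_rfl⟩ h
    · exact hmono self_mem_Ici (mem_Ici.2 h.le) h
  have hle : ∀ x, f m ≤ f x := fun x ↦ by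
    by_cases hx : |x| = m
    · rw [← hf_abs x, hx]
    · exact (hlt x hx).le
  ext σ
  simp only [mem_ofPred_eq, mem_insert_iff, mem_singleton_iff]
  constructor
  · intro hσ
    by_contra hne
    exact (hσ m).not_gt (hlt σ fun h ↦ hne (abs_eq hm |>.1 h))
  · rintro (rfl | rfl)
    · exact hle
    · exact fun x ↦ (heven m).symm ▸ hle x

noncomputable def doubleWell (c σ : ℝ) : ℝ :=
  σ ^ 2 / (2 * c) - log (cosh (σ / c))

noncomputable def tanhGap (c σ : ℝ) : ℝ :=
  σ - tanh (σ / c)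

section

variable {c : ℝ}

theorem tanhGap_zero (c : ℝ) : tanhGap c 0 = 0 := by
  simp [tanhGap]

theorem hasDerivAt_tanhGap (c x : ℝ) :
    HasDerivAt (tanhGap c) (1 - (1 - tanh (x / c) ^ 2) / c) x := by
  have h := (hasDerivAt_id x).sub ((hasDerivAt_tanh_s2 (x / c)).comp x ((hasDerivAt_id x).div_const c))
  refine h.congr_deriv ?_
  ring

theorem continuous_tanhGap (c : ℝ) : Continuous (tanhGap c) :=
  continuous_iff_continuousAt.2 fun x ↦ (hasDerivAt_tanhGap c x).continuousAt

theorem strictConvexOn_tanhGap (hc : 0 < c) : StrictConvexOn ℝ (Ici 0) (tanhGap c) := by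
  refine StrictMonoOn.strictConvexOn_of_deriv (convex_Ici 0) (continuous_tanhGap c).continuousOn ?_
  rw [interior_Ici]
  intro x hx y hy hxy
  simp only [(hasDerivAt_tanhGap c _).deriv]
  have hpos : 0 < tanh (x / c) := tanh_pos (div_pos hx hc)
  have hmono : tanh (x / c) < tanh (y / c) := strictMono_tanh (div_lt_div_of_pos_right hxy hc)
  gcongr

theorem exists_pos_tanhGap_eq_zero (hc : 0 < c) (hc1 : c < 1) :
    ∃ m, 0 < m ∧ tanhGap c m = 0 := by
  have hslope : 1 - (1 - tanh (0 / c) ^ 2) / c < 0 := by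
    rw [zero_div, tanh_zero, sub_neg, lt_div_iff₀ hc]
    linarith
  obtain ⟨x₀, hgx₀, hx₀⟩ := ((hasDerivAt_tanhGap c 0).eventually_lt_of_neg hslope).and
    (Ioo_mem_nhdsGT zero_lt_one) |>.exists
  have hg1 : 0 < tanhGap c 1 := sub_pos.2 (tanh_lt_one _)
  obtain ⟨m, hm, hgm⟩ := intermediate_value_Icc hx₀.2.le (continuous_tanhGap c).continuousOn
    ⟨(tanhGap_zero c ▸ hgx₀).le, hg1.le⟩
  exact ⟨m, hx₀.1.trans_le hm.1, hgm⟩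

theorem hasDerivAt_doubleWell (hc : c ≠ 0) (x : ℝ) :
    HasDerivAt (doubleWell c) (tanhGap c x / c) x := by
  have h := ((hasDerivAt_pow 2 x).div_const (2 * c)).sub
    (((hasDerivAt_id x).div_const c).cosh.log (cosh_pos _).ne')
  refine h.congr_deriv ?_
  simp only [tanhGap, id, tanh_eq_sinh_div_cosh]
  field_simp
  ring

theorem deriv_doubleWell (hc : c ≠ 0) : deriv (doubleWell c) = fun x ↦ tanhGap c x / c :=
  funext fun x ↦ (hasDerivAt_doubleWell hc x).deriv

theorem continuous_doubleWell (hc : c ≠ 0) : Continuous (doubleWell c) :=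
  continuous_iff_continuousAt.2 fun x ↦ (hasDerivAt_doubleWell hc x).continuousAt

theorem doubleWell_neg (c x : ℝ) : doubleWell c (-x) = doubleWell c x := by
  simp only [doubleWell, neg_sq, neg_div, cosh_neg]

theorem deriv_deriv_doubleWell_zero (hc : c ≠ 0) :
    deriv (deriv (doubleWell c)) 0 = (1 - 1 / c) / c := by
  rw [deriv_doubleWell hc, ((hasDerivAt_tanhGap c 0).div_const c).deriv, zero_div, tanh_zero]
  ring

theorem strictAntiOn_doubleWell (hc : 0 < c) {a b : ℝ} (h : ∀ x ∈ Ioo a b, tanhGap c x < 0) :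
    StrictAntiOn (doubleWell c) (Icc a b) := by
  refine strictAntiOn_of_deriv_neg (convex_Icc a b) (continuous_doubleWell hc.ne').continuousOn ?_
  rw [interior_Icc, deriv_doubleWell hc.ne']
  exact fun x hx ↦ div_neg_of_neg_of_pos (h x hx) hc

theorem strictMonoOn_doubleWell (hc : 0 < c) {a : ℝ} (h : ∀ x, a < x → 0 < tanhGap c x) :
    StrictMonoOn (doubleWell c) (Ici a) := by
  refine strictMonoOn_of_deriv_pos (convex_Ici a) (continuous_doubleWell hc.ne').continuousOn ?_
  rw [interior_Ici, deriv_doubleWell hc.ne']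
  exact fun x hx ↦ div_pos (h x hx) hc

end

/-- If `0 < ρ² < 1` then the double-well potential has exactly two global minimizers `±m`,
with `m > 0` the largest solution of `m = tanh(m/ρ²)`, and `V''(0) < 0`. -/
theorem doubleWell_two_minima (ρ : ℝ) (hρ : 0 < ρ) (h1 : ρ ^ 2 < 1) :
    let V : ℝ → ℝ := fun σ => σ ^ 2 / (2 * ρ ^ 2) - Real.log (Real.cosh (σ / ρ ^ 2))
    ∃ m : ℝ, 0 < m ∧ m = Real.tanh (m / ρ ^ 2) ∧
      (∀ m' : ℝ, m' = Real.tanh (m' / ρ ^ 2) → m' ≤ m) ∧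
      {σ : ℝ | ∀ σ' : ℝ, V σ ≤ V σ'} = {m, -m} ∧
      deriv (deriv V) 0 < 0 := by
  intro V
  have hc : 0 < ρ ^ 2 := by positivity
  obtain ⟨m, hm, hgm⟩ := exists_pos_tanhGap_eq_zero hc h1
  have hconv := strictConvexOn_tanhGap hc
  have hneg : ∀ x ∈ Ioo 0 m, tanhGap (ρ ^ 2) x < 0 := fun x hx ↦
    hconv.neg_of_mem_Ioo self_mem_Ici hm.le (tanhGap_zero _) hgm hx
  have hpos : ∀ x, m < x → 0 < tanhGap (ρ ^ 2) x := fun x hx ↦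
    hconv.pos_of_lt self_mem_Ici (hm.trans hx).le (tanhGap_zero _) hgm hm hx
  refine ⟨m, hm, sub_eq_zero.1 hgm,
    fun m' hm' ↦ not_lt.1 fun h ↦ (hpos m' h).ne' (sub_eq_zero.2 hm'), ?_, ?_⟩
  · exact setOf_forall_le_eq_pair_of_even hm.le (doubleWell_neg _)
      (strictAntiOn_doubleWell hc hneg) (strictMonoOn_doubleWell hc hpos)
  · change deriv (deriv (doubleWell (ρ ^ 2))) 0 < 0
    rw [deriv_deriv_doubleWell_zero hc.ne']
    exact div_neg_of_neg_of_pos (by rw [sub_neg, lt_div_iff₀ hc, one_mul]; exact h1) hc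
end

section
/- Let 0 ≤ λ < 1/(2d), a₀ > 0 with λ(1+a₀)2d < 1, and let C be a matrix with 0 ≤ C_{x,y} ≤ a₀(λ∂/(I-λ∂))_{x,y} entrywise. Then D = Σ_{n≥0} Cⁿ converges entrywise and satisfies D_{x,y} ≤ ((I-λ∂)(I - λ(1+a₀)∂)⁻¹)_{x,y} for all x,y. -/
/-!
All matrices here have nonnegative entries, so we compute with `ℝ≥0∞`-valued kernels, whose
`tsum`-products are always defined, associative and monotone, and pass to `ℝ` only at the end:
a real `tsum` of `toReal`s is the `toReal` of the extended sum as soon as every term is finite.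

Write `R_t = Σ tⁿ∂ⁿ`. The Neumann series `Σ tⁿKⁿb` is the least supersolution of `Y = b + tKY`.
Since `R_{s+r} = (I + r∂R_{s+r}) + s∂R_{s+r}`, this gives `R_s (I + r∂R_{s+r}) ≤ R_{s+r}`. Taking
`s = λ`, `r = a₀λ`, the hypothesis `C ≤ r∂R_s` then shows that `E = I + r∂R_{s+r}` satisfies
`I + CE ≤ E`, hence `Σ Cⁿ ≤ E`. As the rows of `∂` sum to at most `2d`, `E` is finite when
`λ(1 + a₀)2d < 1`, and `E = (I - λ∂)R_{λ(1+a₀)}` is the right-hand side.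
-/

/-- The lattice `ℤ^d`. -/
abbrev Zd (d : ℕ) := Fin d → ℤ

/-- Nearest-neighbor adjacency matrix of `ℤ^d`. -/
noncomputable def adj {d : ℕ} (x y : Zd d) : ℝ :=
  if (∑ i, (x i - y i).natAbs) = 1 then 1 else 0

/-- Matrix powers of the adjacency matrix (entrywise, via `tsum`). -/
noncomputable def adjPow (d : ℕ) : ℕ → Zd d → Zd d → ℝ
  | 0 => fun x y => if x = y then 1 else 0
  | n + 1 => fun x y => ∑' z : Zd d, adj x z * adjPow d n z y

/-- The resolvent `(I - λ∂)⁻¹` via its Neumann series, entrywise. -/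
noncomputable def res (d : ℕ) (lam : ℝ) (x y : Zd d) : ℝ :=
  ∑' n : ℕ, lam ^ n * adjPow d n x y

/-- Entrywise powers of a general infinite matrix `C`. -/
noncomputable def matPow {d : ℕ} (C : Zd d → Zd d → ℝ) : ℕ → Zd d → Zd d → ℝ
  | 0 => fun x y => if x = y then 1 else 0
  | n + 1 => fun x y => ∑' z : Zd d, C x z * matPow C n z y

open scoped ENNReal

namespace ENNKernel

variable {ι : Type*}

noncomputable def kmul (K L : ι → ι → ℝ≥0∞) (x y : ι) : ℝ≥0∞ :=
  ∑' z, K x z * L z y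

def kone [DecidableEq ι] (x y : ι) : ℝ≥0∞ :=
  if x = y then 1 else 0

noncomputable def kpow [DecidableEq ι] (K : ι → ι → ℝ≥0∞) : ℕ → ι → ι → ℝ≥0∞
  | 0 => kone
  | n + 1 => kmul K (kpow K n)

noncomputable def neumannSeries [DecidableEq ι] (K : ι → ι → ℝ≥0∞) (t : ℝ≥0∞) (x y : ι) :
    ℝ≥0∞ :=
  ∑' n, t ^ n * kpow K n x y

variable {K L M : ι → ι → ℝ≥0∞}

theorem kmul_assoc : kmul (kmul K L) M = kmul K (kmul L M) := by
  funext x y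
  simp only [kmul, ← ENNReal.tsum_mul_right, ← ENNReal.tsum_mul_left, mul_assoc]
  exact ENNReal.tsum_comm

@[gcongr]
theorem kmul_mono {K' L' : ι → ι → ℝ≥0∞} (hK : ∀ x y, K x y ≤ K' x y)
    (hL : ∀ x y, L x y ≤ L' x y) (x y : ι) : kmul K L x y ≤ kmul K' L' x y :=
  ENNReal.tsum_le_tsum fun z => mul_le_mul' (hK x z) (hL z y)

theorem kmul_const_mul (c : ℝ≥0∞) (x y : ι) :
    kmul K (fun z y => c * L z y) x y = c * kmul K L x y := by
  simp only [kmul, ← ENNReal.tsum_mul_left, mul_left_comm]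

theorem const_mul_kmul (c : ℝ≥0∞) (x y : ι) :
    kmul (fun x z => c * K x z) L x y = c * kmul K L x y := by
  simp only [kmul, ← ENNReal.tsum_mul_left, mul_assoc]

theorem kmul_finsetSum {α : Type*} (s : Finset α) (f : α → ι → ι → ℝ≥0∞) (x y : ι) :
    kmul K (fun z y => ∑ i ∈ s, f i z y) x y = ∑ i ∈ s, kmul K (f i) x y := by
  simp only [kmul, Finset.mul_sum]
  exact Summable.tsum_finsetSum fun _ _ => ENNReal.summable

theorem kmul_tsum {α : Type*} (f : α → ι → ι → ℝ≥0∞) (x y : ι) :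
    kmul K (fun z y => ∑' i, f i z y) x y = ∑' i, kmul K (f i) x y := by
  simp only [kmul, ← ENNReal.tsum_mul_left]
  exact ENNReal.tsum_comm

theorem tsum_kmul {α : Type*} (f : α → ι → ι → ℝ≥0∞) (x y : ι) :
    kmul (fun x z => ∑' i, f i x z) L x y = ∑' i, kmul (f i) L x y := by
  simp only [kmul, ← ENNReal.tsum_mul_right]
  exact ENNReal.tsum_comm

theorem kmul_le_of_rowSum_le {s m : ℝ≥0∞} {y : ι} (hK : ∀ x, ∑' z, K x z ≤ s)
    (hL : ∀ z, L z y ≤ m) (x : ι) : kmul K L x y ≤ s * m :=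
  calc ∑' z, K x z * L z y ≤ ∑' z, K x z * m :=
        ENNReal.tsum_le_tsum fun z => by gcongr; exact hL z
    _ = (∑' z, K x z) * m := ENNReal.tsum_mul_right
    _ ≤ s * m := by gcongr; exact hK x

variable [DecidableEq ι]

theorem kone_ne_top (x y : ι) : kone x y ≠ ⊤ := by
  unfold kone; split_ifs <;> simp

theorem toReal_kone (x y : ι) : (kone x y).toReal = if x = y then 1 else 0 := by
  unfold kone; split_ifs <;> simp

theorem kone_kmul : kmul kone K = K := by
  funext x y
  simp [kmul, kone]

theorem kmul_kone : kmul K kone = K := by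
  funext x y
  simp [kmul, kone]

theorem kmul_neumannSeries (t : ℝ≥0∞) (x y : ι) :
    kmul K (neumannSeries K t) x y = ∑' n, t ^ n * kpow K (n + 1) x y := by
  unfold neumannSeries
  rw [kmul_tsum]
  simp only [kmul_const_mul]
  rfl

theorem neumannSeries_eq (t : ℝ≥0∞) (x y : ι) :
    neumannSeries K t x y = kone x y + t * kmul K (neumannSeries K t) x y := by
  rw [neumannSeries, tsum_eq_zero_add' ENNReal.summable, kmul_neumannSeries,
    ← ENNReal.tsum_mul_left]
  simp only [pow_zero, one_mul, pow_succ', mul_assoc]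
  rfl

theorem kmul_neumannSeries_le_of_le {b Y : ι → ι → ℝ≥0∞} {t : ℝ≥0∞}
    (hY : ∀ x y, b x y + t * kmul K Y x y ≤ Y x y) (x y : ι) :
    kmul (neumannSeries K t) b x y ≤ Y x y := by
  have partial_le : ∀ N x y, ∑ n ∈ Finset.range N, t ^ n * kmul (kpow K n) b x y ≤ Y x y := by
    intro N
    induction N with
    | zero => simp
    | succ N ih =>
      intro x y
      calc ∑ n ∈ Finset.range (N + 1), t ^ n * kmul (kpow K n) b x y
          = b x y + t * kmul K (fun z y =>
              ∑ n ∈ Finset.range N, t ^ n * kmul (kpow K n) b z y) x y := by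
            rw [Finset.sum_range_succ', kmul_finsetSum, Finset.mul_sum]
            simp only [kmul_const_mul, kpow, kmul_assoc, kone_kmul, pow_succ, pow_zero, one_mul]
            rw [add_comm]
            exact congrArg _ (Finset.sum_congr rfl fun n _ => by ring)
        _ ≤ b x y + t * kmul K Y x y := by gcongr with z y; exact ih z y
        _ ≤ Y x y := hY x y
  unfold neumannSeries
  rw [tsum_kmul]
  simp only [const_mul_kmul]
  exact ENNReal.tsum_le_of_sum_range_le fun N => partial_le N x y

theorem kmul_neumannSeries_le_neumannSeries_add (s r : ℝ≥0∞) (x y : ι) :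
    kmul (neumannSeries K s) (fun x y => kone x y + r * kmul K (neumannSeries K (s + r)) x y)
      x y ≤ neumannSeries K (s + r) x y := by
  refine kmul_neumannSeries_le_of_le (fun x y => le_of_eq ?_) x y
  conv_rhs => rw [neumannSeries_eq]
  ring

theorem tsum_kpow_le_of_le {c : ι → ι → ℝ≥0∞} {s r : ℝ≥0∞}
    (hc : ∀ x y, c x y ≤ r * kmul K (neumannSeries K s) x y) (x y : ι) :
    ∑' n, kpow c n x y ≤ kone x y + r * kmul K (neumannSeries K (s + r)) x y := by
  set E := fun x y => kone x y + r * kmul K (neumannSeries K (s + r)) x y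
  have hsum : ∑' n, kpow c n x y = kmul (neumannSeries c 1) kone x y := by
    simp [kmul_kone, neumannSeries]
  rw [hsum]
  refine kmul_neumannSeries_le_of_le (Y := E) (fun x y => ?_) x y
  change kone x y + 1 * kmul c E x y ≤ kone x y + r * kmul K (neumannSeries K (s + r)) x y
  rw [one_mul]
  gcongr
  calc kmul c E x y ≤ kmul (fun x z => r * kmul K (neumannSeries K s) x z) E x y :=
        kmul_mono hc (fun _ _ => le_rfl) x y
    _ = r * kmul K (kmul (neumannSeries K s) E) x y := by rw [const_mul_kmul, kmul_assoc]
    _ ≤ r * kmul K (neumannSeries K (s + r)) x y := by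
        gcongr
        exact kmul_neumannSeries_le_neumannSeries_add s r _ _

theorem kpow_le_pow {s : ℝ≥0∞} (hK : ∀ x, ∑' z, K x z ≤ s) (n : ℕ) (x y : ι) :
    kpow K n x y ≤ s ^ n := by
  induction n generalizing x with
  | zero => simp only [kpow, kone]; split_ifs <;> simp
  | succ n ih => rw [pow_succ']; exact kmul_le_of_rowSum_le hK (fun z => ih z) x

theorem neumannSeries_le {s : ℝ≥0∞} (hK : ∀ x, ∑' z, K x z ≤ s) (t : ℝ≥0∞) (x y : ι) :
    neumannSeries K t x y ≤ (1 - t * s)⁻¹ :=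
  calc neumannSeries K t x y ≤ ∑' n, (t * s) ^ n :=
        ENNReal.tsum_le_tsum fun n => by rw [mul_pow]; gcongr; exact kpow_le_pow hK n x y
    _ = (1 - t * s)⁻¹ := ENNReal.tsum_geometric _

theorem kmul_neumannSeries_ne_top {s : ℝ≥0∞} (hK : ∀ x, ∑' z, K x z ≤ s) (hs : s ≠ ⊤)
    {t : ℝ≥0∞} (ht : t * s < 1) (x y : ι) : kmul K (neumannSeries K t) x y ≠ ⊤ :=
  ne_top_of_le_ne_top (ENNReal.mul_ne_top hs (ENNReal.inv_ne_top.2 (tsub_pos_iff_lt.2 ht).ne'))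
    (kmul_le_of_rowSum_le hK (fun z => neumannSeries_le hK t z y) x)

end ENNKernel

open ENNKernel

section Lattice

variable {d : ℕ}

theorem adj_nonneg (x y : Zd d) : 0 ≤ adj x y := by
  unfold adj; split_ifs <;> norm_num

theorem exists_eq_update_of_adj_ne_zero {x z : Zd d} (h : adj x z ≠ 0) :
    ∃ i, z = Function.update x i (x i + 1) ∨ z = Function.update x i (x i - 1) := by
  have hsum : ∑ i, (x i - z i).natAbs = 1 := by
    by_contra hne
    exact h (if_neg hne)
  obtain ⟨i, -, hi⟩ := Finset.exists_ne_zero_of_sum_ne_zero (hsum.trans_ne one_ne_zero)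
  have hsplit := Finset.add_sum_erase Finset.univ (fun j => (x j - z j).natAbs) (Finset.mem_univ i)
  rw [hsum] at hsplit
  have hrest := Finset.sum_eq_zero_iff.1
    (show ∑ j ∈ Finset.univ.erase i, (x j - z j).natAbs = 0 by omega)
  have hz : z = Function.update x i (z i) := by
    funext j
    by_cases hj : j = i
    · subst hj; simp
    · have := hrest j (Finset.mem_erase.2 ⟨hj, Finset.mem_univ j⟩)
      rw [Function.update_of_ne hj]
      omega
  have hzi : z i = x i + 1 ∨ z i = x i - 1 := by omega
  exact ⟨i, hzi.imp (fun h => hz.trans (congrArg _ h)) (fun h => hz.trans (congrArg _ h))⟩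

noncomputable def ennAdj (d : ℕ) (x y : Zd d) : ℝ≥0∞ :=
  ENNReal.ofReal (adj x y)

theorem tsum_ennAdj_le (x : Zd d) : ∑' z, ennAdj d x z ≤ 2 * d := by
  have hle : ∀ z, ennAdj d x z ≤ ∑ i, ((if z = Function.update x i (x i + 1) then 1 else 0) +
      (if z = Function.update x i (x i - 1) then 1 else 0)) := by
    intro z
    by_cases h : adj x z = 0
    · simp [ennAdj, h]
    obtain ⟨i, hi⟩ := exists_eq_update_of_adj_ne_zero h
    have hone : adj x z = 1 := by unfold adj at h ⊢; split_ifs at h ⊢ <;> simp_all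
    rw [ennAdj, hone, ENNReal.ofReal_one]
    refine le_trans ?_ (Finset.single_le_sum (fun _ _ => zero_le) (Finset.mem_univ i))
    rcases hi with hi | hi <;> simp [hi]
  calc ∑' z, ennAdj d x z ≤ ∑' z, ∑ i, ((if z = Function.update x i (x i + 1) then 1 else 0) +
        (if z = Function.update x i (x i - 1) then 1 else 0)) := ENNReal.tsum_le_tsum hle
    _ = 2 * d := by
      rw [Summable.tsum_finsetSum fun _ _ => ENNReal.summable]
      simp [ENNReal.tsum_add, tsum_ite_eq]
      ring

theorem matPow_eq_toReal_kpow {C : Zd d → Zd d → ℝ} (hC : ∀ x y, 0 ≤ C x y)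
    (hfin : ∀ n x y, kpow (fun x y => ENNReal.ofReal (C x y)) n x y ≠ ⊤) (n : ℕ) (x y : Zd d) :
    matPow C n x y = (kpow (fun x y => ENNReal.ofReal (C x y)) n x y).toReal := by
  induction n generalizing x with
  | zero => exact (toReal_kone x y).symm
  | succ n ih =>
    simp only [matPow, kpow, kmul]
    rw [ENNReal.tsum_toReal_eq fun z => ENNReal.mul_ne_top ENNReal.ofReal_ne_top (hfin n z y)]
    simp [ENNReal.toReal_mul, ENNReal.toReal_ofReal (hC _ _), ih]

theorem adjPow_eq_matPow (d : ℕ) : adjPow d = matPow adj := by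
  funext n
  induction n with
  | zero => rfl
  | succ n ih => funext x y; simp only [adjPow, matPow, ih]

theorem kpow_ennAdj_ne_top (n : ℕ) (x y : Zd d) : kpow (ennAdj d) n x y ≠ ⊤ :=
  ne_top_of_le_ne_top (ENNReal.pow_ne_top (by simp [ENNReal.mul_eq_top]))
    (kpow_le_pow tsum_ennAdj_le n x y)

theorem adjPow_eq_toReal_kpow (n : ℕ) (x y : Zd d) :
    adjPow d n x y = (kpow (ennAdj d) n x y).toReal := by
  rw [adjPow_eq_matPow]
  exact matPow_eq_toReal_kpow adj_nonneg kpow_ennAdj_ne_top n x y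

theorem res_eq_toReal_neumannSeries {t : ℝ} (ht : 0 ≤ t) (x y : Zd d) :
    res d t x y = (neumannSeries (ennAdj d) (ENNReal.ofReal t) x y).toReal := by
  unfold neumannSeries
  rw [ENNReal.tsum_toReal_eq fun n =>
    ENNReal.mul_ne_top (ENNReal.pow_ne_top ENNReal.ofReal_ne_top) (kpow_ennAdj_ne_top n x y)]
  simp [res, ENNReal.toReal_mul, ENNReal.toReal_pow, ENNReal.toReal_ofReal ht,
    adjPow_eq_toReal_kpow]

theorem ofReal_le_mul_kmul_neumannSeries {lam a0 v : ℝ} (hlam : 0 ≤ lam) (ha0 : 0 ≤ a0)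
    {x y : Zd d} (hv : v ≤ a0 * ∑' n : ℕ, lam ^ (n + 1) * adjPow d (n + 1) x y) :
    ENNReal.ofReal v ≤ ENNReal.ofReal (a0 * lam) *
      kmul (ennAdj d) (neumannSeries (ennAdj d) (ENNReal.ofReal lam)) x y := by
  set A := kmul (ennAdj d) (neumannSeries (ennAdj d) (ENNReal.ofReal lam)) x y with hA
  have hsum : ∑' n : ℕ, lam ^ (n + 1) * adjPow d (n + 1) x y =
      (ENNReal.ofReal lam * A).toReal := by
    rw [hA, kmul_neumannSeries, ← ENNReal.tsum_mul_left, ENNReal.tsum_toReal_eq fun n =>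
      ENNReal.mul_ne_top ENNReal.ofReal_ne_top
        (ENNReal.mul_ne_top (ENNReal.pow_ne_top ENNReal.ofReal_ne_top) (kpow_ennAdj_ne_top _ x y))]
    refine tsum_congr fun n => ?_
    simp [ENNReal.toReal_mul, ENNReal.toReal_pow, ENNReal.toReal_ofReal hlam,
      adjPow_eq_toReal_kpow, pow_succ]
    ring
  calc ENNReal.ofReal v ≤ ENNReal.ofReal a0 * ENNReal.ofReal (ENNReal.ofReal lam * A).toReal := by
        rw [← ENNReal.ofReal_mul ha0, ← hsum]
        exact ENNReal.ofReal_le_ofReal hv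
    _ ≤ ENNReal.ofReal a0 * (ENNReal.ofReal lam * A) := by
        gcongr; exact ENNReal.ofReal_toReal_le
    _ = ENNReal.ofReal (a0 * lam) * A := by rw [ENNReal.ofReal_mul ha0, mul_assoc]

theorem tsum_kpow_ofReal_le {lam a0 : ℝ} (hlam : 0 ≤ lam) (ha0 : 0 ≤ a0)
    {C : Zd d → Zd d → ℝ}
    (hC : ∀ x y, C x y ≤ a0 * ∑' n : ℕ, lam ^ (n + 1) * adjPow d (n + 1) x y) (x y : Zd d) :
    ∑' n, kpow (fun x y => ENNReal.ofReal (C x y)) n x y ≤ kone x y + ENNReal.ofReal (a0 * lam) *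
      kmul (ennAdj d) (neumannSeries (ennAdj d) (ENNReal.ofReal (lam * (1 + a0)))) x y := by
  have hsplit : ENNReal.ofReal lam + ENNReal.ofReal (a0 * lam) =
      ENNReal.ofReal (lam * (1 + a0)) := by
    rw [← ENNReal.ofReal_add hlam (by positivity)]; ring_nf
  simpa only [hsplit] using
    tsum_kpow_le_of_le (fun x y => ofReal_le_mul_kmul_neumannSeries hlam ha0 (hC x y)) x y

theorem kmul_ennAdj_neumannSeries_ne_top {t : ℝ} (ht : 0 ≤ t) (htd : t * (2 * d) < 1)
    (x y : Zd d) : kmul (ennAdj d) (neumannSeries (ennAdj d) (ENNReal.ofReal t)) x y ≠ ⊤ := by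
  refine kmul_neumannSeries_ne_top tsum_ennAdj_le (by simp [ENNReal.mul_eq_top]) ?_ x y
  rw [← ENNReal.ofReal_lt_one, ENNReal.ofReal_mul ht] at htd
  simpa using htd

theorem tsum_sub_adj_mul_res {mu : ℝ} (hmu : 0 ≤ mu) (hmud : mu * (2 * d) < 1) (lam : ℝ)
    (x y : Zd d) :
    ∑' z, ((if x = z then 1 else 0) - lam * adj x z) * res d mu z y =
      (if x = y then 1 else 0) + (mu - lam) *
        (kmul (ennAdj d) (neumannSeries (ennAdj d) (ENNReal.ofReal mu)) x y).toReal := by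
  have hReq := neumannSeries_eq (K := ennAdj d) (ENNReal.ofReal mu) x y
  have hAR := kmul_ennAdj_neumannSeries_ne_top hmu hmud
  have hR : ∀ z, neumannSeries (ennAdj d) (ENNReal.ofReal mu) z y ≠ ⊤ := fun z => by
    rw [neumannSeries_eq]
    exact ENNReal.add_ne_top.2 ⟨kone_ne_top z y, ENNReal.mul_ne_top ENNReal.ofReal_ne_top (hAR z y)⟩
  set R := neumannSeries (ennAdj d) (ENNReal.ofReal mu)
  have hterm : ∀ z, ((if x = z then 1 else 0) - lam * adj x z) * res d mu z y =
      (kone x z * R z y).toReal - lam * (ennAdj d x z * R z y).toReal := fun z => by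
    simp only [res_eq_toReal_neumannSeries hmu, ENNReal.toReal_mul, ennAdj,
      ENNReal.toReal_ofReal (adj_nonneg x z), toReal_kone, R]
    ring
  have hsum : ∀ K : Zd d → Zd d → ℝ≥0∞, (∀ z, K x z ≠ ⊤) →
      ∑' z, (K x z * R z y).toReal = (kmul K R x y).toReal := fun K hK =>
    (ENNReal.tsum_toReal_eq fun z => ENNReal.mul_ne_top (hK z) (hR z)).symm
  have hkR : kmul kone R x y ≠ ⊤ := by rw [kone_kmul]; exact hR x
  rw [tsum_congr hterm, Summable.tsum_sub (ENNReal.summable_toReal hkR)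
    ((ENNReal.summable_toReal (hAR x y)).mul_left lam), tsum_mul_left, hsum kone (kone_ne_top x),
    hsum (ennAdj d) fun z => ENNReal.ofReal_ne_top, kone_kmul, hReq,
    ENNReal.toReal_add (kone_ne_top x y) (ENNReal.mul_ne_top ENNReal.ofReal_ne_top (hAR x y)),
    ENNReal.toReal_mul, ENNReal.toReal_ofReal hmu, toReal_kone]
  ring

end Lattice

theorem dobrushin_matrix_bound_general (d : ℕ) (lam a0 : ℝ)
    (h1 : 0 ≤ lam) (h3 : 0 < a0)
    (h4 : lam * (1 + a0) * (2 * d) < 1)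
    (C : Zd d → Zd d → ℝ)
    (hC : ∀ x y : Zd d,
      0 ≤ C x y ∧ C x y ≤ a0 * ∑' n : ℕ, lam ^ (n + 1) * adjPow d (n + 1) x y) :
    ∀ x y : Zd d,
      Summable (fun n : ℕ => matPow C n x y) ∧
      (∑' n : ℕ, matPow C n x y) ≤
        ∑' z : Zd d,
          ((if x = z then 1 else 0) - lam * adj x z) * res d (lam * (1 + a0)) z y := by
  have hmu : 0 ≤ lam * (1 + a0) := by positivity
  set c : Zd d → Zd d → ℝ≥0∞ := fun x y => ENNReal.ofReal (C x y)
  set A := kmul (ennAdj d) (neumannSeries (ennAdj d) (ENNReal.ofReal (lam * (1 + a0))))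
  have hA := kmul_ennAdj_neumannSeries_ne_top hmu h4
  have hbound := tsum_kpow_ofReal_le h1 h3.le (fun x y => (hC x y).2)
  have hfin : ∀ x y, kone x y + ENNReal.ofReal (a0 * lam) * A x y ≠ ⊤ := fun x y =>
    ENNReal.add_ne_top.2 ⟨kone_ne_top x y, ENNReal.mul_ne_top ENNReal.ofReal_ne_top (hA x y)⟩
  have hterm_fin : ∀ n x y, kpow c n x y ≠ ⊤ := fun n x y =>
    ne_top_of_le_ne_top (hfin x y) ((ENNReal.le_tsum n).trans (hbound x y))
  intro x y
  simp only [matPow_eq_toReal_kpow (fun x y => (hC x y).1) hterm_fin]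
  refine ⟨ENNReal.summable_toReal (ne_top_of_le_ne_top (hfin x y) (hbound x y)), ?_⟩
  rw [← ENNReal.tsum_toReal_eq (hterm_fin · x y), tsum_sub_adj_mul_res hmu h4]
  calc (∑' n, kpow c n x y).toReal ≤ (kone x y + ENNReal.ofReal (a0 * lam) * A x y).toReal :=
        ENNReal.toReal_mono (hfin x y) (hbound x y)
    _ = _ := by
      rw [ENNReal.toReal_add (kone_ne_top x y) (ENNReal.mul_ne_top ENNReal.ofReal_ne_top (hA x y)),
        ENNReal.toReal_mul, ENNReal.toReal_ofReal (by positivity), toReal_kone]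
      ring

/-- If `0 ≤ C_{x,y} ≤ a₀(λ∂(I-λ∂)⁻¹)_{x,y}` entrywise and `λ(1+a₀)2d < 1`, then
`D = Σ_{n≥0} Cⁿ` converges entrywise and `D_{x,y} ≤ ((I-λ∂)(I-λ(1+a₀)∂)⁻¹)_{x,y}`. -/
theorem dobrushin_matrix_bound (d : ℕ) (hd : 0 < d) (lam a0 : ℝ)
    (h1 : 0 ≤ lam) (h2 : lam < 1 / (2 * d)) (h3 : 0 < a0)
    (h4 : lam * (1 + a0) * (2 * d) < 1)
    (C : Zd d → Zd d → ℝ)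
    (hC : ∀ x y : Zd d,
      0 ≤ C x y ∧ C x y ≤ a0 * ∑' n : ℕ, lam ^ (n + 1) * adjPow d (n + 1) x y) :
    ∀ x y : Zd d,
      Summable (fun n : ℕ => matPow C n x y) ∧
      (∑' n : ℕ, matPow C n x y) ≤
        ∑' z : Zd d,
          ((if x = z then 1 else 0) - lam * adj x z) * res d (lam * (1 + a0)) z y :=
  dobrushin_matrix_bound_general d lam a0 h1 h3 h4 C hC
end
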